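/- A partition λ is the conjugate of a doubled distinct partition (λ ∈ 𝒟𝒟^tr) if and only if its binary word ψ(λ) = (c_k)_{k∈ℤ} satisfies c_{−1} = 0 and c_{−k−2} = 1 − c_k for all integers k ≥ 0. -/

import Mathlib

open scoped Classical

/-- `p k` is the `(k+1)`-st part `λ_{k+1}` of the partition `λ` :
partitions are encoded by their (eventually zero, antitone) sequence of parts. -/
def IsPartition (p : ℕ → ℕ) : Prop :=
  Antitone p ∧ ∃ N, ∀ i, N ≤ i → p i = 0

/-- The number of (nonzero) parts of a partition. -/
noncomputable def plen (p : ℕ → ℕ) : ℕ := Nat.card {i : ℕ // p i ≠ 0}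

/-- The number of boxes `|λ|` of a partition. -/
noncomputable def psize (p : ℕ → ℕ) : ℕ := ∑ i ∈ Finset.range (plen p), p i

/-- The conjugate partition : `pconj p j = λ^tr_{j+1}`. -/
noncomputable def pconj (p : ℕ → ℕ) (j : ℕ) : ℕ := Nat.card {i : ℕ // j + 1 ≤ p i}

/-- The size of the Durfee square of a partition. -/
noncomputable def durfee (p : ℕ → ℕ) : ℕ := Nat.card {i : ℕ // i + 1 ≤ p i}

/-- The cells (boxes) of the Young diagram, `0`-indexed : `(i, j)` is the box in
row `i+1` and column `j+1`. -/
noncomputable def cells (p : ℕ → ℕ) : Finset (ℕ × ℕ) :=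
  (Finset.range (plen p) ×ˢ Finset.range (p 0)).filter fun s => s.2 < p s.1

/-- The hook length of the (0-indexed) box `(i, j)` :
`h = λ_{i+1} - (j+1) + λ^tr_{j+1} - (i+1) + 1`. -/
noncomputable def hookLen (p : ℕ → ℕ) (i j : ℕ) : ℕ :=
  (p i - j) + (pconj p j - i) - 1

/-- The multiset of hook lengths `ℋ(λ)`. -/
noncomputable def hooks (p : ℕ → ℕ) : Multiset ℕ :=
  (cells p).val.map fun s => hookLen p s.1 s.2

/-- The multiset of hook lengths of the boxes strictly above the main diagonal. -/
noncomputable def hooksAbove (p : ℕ → ℕ) : Multiset ℕ :=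
  ((cells p).filter fun s => s.1 < s.2).val.map fun s => hookLen p s.1 s.2

/-- The multiset of hook lengths of the boxes strictly below the main diagonal. -/
noncomputable def hooksBelow (p : ℕ → ℕ) : Multiset ℕ :=
  ((cells p).filter fun s => s.2 < s.1).val.map fun s => hookLen p s.1 s.2

/-- `p` is an `n`-core : no hook length is equal to `n`. -/
def IsCore (n : ℕ) (p : ℕ → ℕ) : Prop := n ∉ hooks p

/-- Self-conjugate partitions. -/
def SelfConj (p : ℕ → ℕ) : Prop := p = pconj p

/-- Distinct partitions (strictly decreasing nonzero parts). -/
def IsDistinct (p : ℕ → ℕ) : Prop := ∀ i, p (i + 1) ≠ 0 → p (i + 1) < p i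

/-- Doubled distinct partitions : `λ_i = λ^tr_i + 1` for `i` at most
the size of the Durfee square. -/
def IsDD (p : ℕ → ℕ) : Prop := ∀ i < durfee p, p i = pconj p i + 1

/-- Conjugates of doubled distinct partitions. -/
def IsDDtr (p : ℕ → ℕ) : Prop := ∃ q, IsPartition q ∧ IsDD q ∧ p = pconj q

/-- The doubled distinct partition `λ̄λ̄` of a distinct partition `λ̄` :
add `λ̄_i` boxes to the `i`-th column of the shifted Young diagram of `λ̄`. -/
noncomputable def double (b : ℕ → ℕ) : ℕ → ℕ := fun i =>
  if i < plen b then b i + (i + 1)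
  else Nat.card {j : ℕ // j < plen b ∧ i + 1 ≤ b j + j}

/-- The self-conjugate partition associated with a distinct partition `λ̄` :
add `λ̄_i - 1` boxes to the `i`-th column of the shifted Young diagram of `λ̄`. -/
noncomputable def scOf (b : ℕ → ℕ) : ℕ → ℕ := fun i =>
  if i < plen b then b i + i
  else Nat.card {j : ℕ // j < plen b ∧ i + 1 ≤ b j + j}

/-- The binary word `ψ(λ) = (c_k)_{k ∈ ℤ}` of a partition :
`c_k = 0` iff `k ∈ {λ_i - i : i ≥ 1}` and `c_k = 1` otherwise
(i.e. iff `k ∈ {j - λ^tr_j - 1 : j ≥ 1}`). -/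
noncomputable def word (p : ℕ → ℕ) (k : ℤ) : ℕ :=
  if ∃ m : ℕ, k = (p m : ℤ) - ((m : ℤ) + 1) then 0 else 1

/-- The `g`-charge of a `g`-core : `m_i = min {k ∈ ℤ : c_{kg+i} = 1}`. -/
noncomputable def ncharge (g : ℕ) (p : ℕ → ℕ) (i : ℕ) : ℤ :=
  sInf {k : ℤ | word p (k * (g : ℤ) + (i : ℤ)) = 1}

/-- The subword of residue `k` modulo `g` of the word of `p`. -/
noncomputable def subword (g k : ℕ) (p : ℕ → ℕ) (i : ℤ) : ℕ :=
  word p ((g : ℤ) * i + (k : ℤ))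

/-- The shift turning the subword of residue `k` into a balanced partition word. -/
noncomputable def qcharge (g : ℕ) (p : ℕ → ℕ) (k : ℕ) : ℤ :=
  (Nat.card {i : ℕ // subword g k p (i : ℤ) = 0} : ℤ) -
    (Nat.card {i : ℕ // subword g k p (-((i : ℤ) + 1)) = 1} : ℤ)

/-- `ν` is the `k`-th component of the `g`-quotient of `p` : its word is the
subword of residue `k` of the word of `p`, reindexed so as to be balanced. -/
def IsQuotientAt (g : ℕ) (p : ℕ → ℕ) (k : ℕ) (ν : ℕ → ℕ) : Prop :=
  ∀ i : ℤ, word ν i = subword g k p (i + qcharge g p k)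

/-- `ω` is the `g`-core of `p` : every subword of its word is sorted
(all `0`'s, then all `1`'s), with transition index the charge of `p`. -/
def IsCoreOf (g : ℕ) (p ω : ℕ → ℕ) : Prop :=
  ∀ k < g, ∀ i : ℤ, (subword g k ω i = 1 ↔ qcharge g p k ≤ i)

/-- `(ω, ν)` is the Littlewood decomposition of `p` for the modulus `g`. -/
def IsLittlewood (g : ℕ) (p ω : ℕ → ℕ) (ν : ℕ → ℕ → ℕ) : Prop :=
  IsCoreOf g p ω ∧ ∀ k < g, IsQuotientAt g p k (ν k)

/-- The number `a_r` of boxes of residue `r` modulo `g`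
(the residue of the box `(i, j)` -- `0`-indexed -- being `(j - i) mod g`). -/
noncomputable def resCount (g : ℕ) (p : ℕ → ℕ) (r : ℕ) : ℕ :=
  ((cells p).filter fun s => ((s.2 : ℤ) - (s.1 : ℤ)) % (g : ℤ) = (r : ℤ)).card

/-- The rectangular partition with `r` rows of length `c`. -/
def rect (r c : ℕ) : ℕ → ℕ := fun i => if i < r then c else 0

/-- The statistic `m = max({1} ∪ {(g + λ̄_i)/g : λ̄_i ≡ 0 (mod g)})`. -/
noncomputable def mStat (g : ℕ) (b : ℕ → ℕ) : ℕ :=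
  sSup ({1} ∪ {k : ℕ | ∃ i < plen b, g ∣ b i ∧ k = (g + b i) / g})

/-- The statistic `m' = max({0} ∪ {λ̄_i/g : λ̄_i ≡ g/2 (mod g)})`. -/
noncomputable def mStat' (g : ℕ) (b : ℕ → ℕ) : ℕ :=
  sSup ({0} ∪ {k : ℕ | ∃ i < plen b, 2 * (b i % g) = g ∧ k = b i / g})

/-! Conjugation reflects and complements the word: `ψ(λ^tr)_k = 1 - ψ(λ)_{-k-1}`. The `0`'s of
`ψ(μ)` at positions `k ≥ 0` sit exactly at `μ_i - i - 1` for `i` at most the Durfee size `d`,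
and `μ^tr` has the same `d`. Hence `μ` is doubled distinct, i.e. `μ_i - i = (μ^tr_i - i) + 1` for
`i ≤ d`, iff `ψ(μ)_0 = 1` and `ψ(μ)_{k+1} = ψ(μ^tr)_k` for `k ≥ 0`: both sides are strictly
decreasing in `i`, so they agree termwise as soon as they take the same set of values. For
`μ = λ^tr` the conjugation rule turns this into `c_{-1} = 0` and `c_{-k-2} = 1 - c_k`. -/

theorem lt_card_subtype_iff_of_antitone {P : ℕ → Prop} (hP : Antitone P) (hex : ∃ n, ¬ P n)
    (i : ℕ) : i < Nat.card {i // P i} ↔ P i := by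
  have hP_iff : ∀ i, P i ↔ i < Nat.find hex := fun i =>
    ⟨fun hi => lt_of_not_ge fun h => Nat.find_spec hex (hP h hi),
      fun hi => not_not.1 (Nat.find_min hex hi)⟩
  have hcard : Nat.card {i // P i} = Nat.find hex := by
    rw [Nat.card_congr (Equiv.subtypeEquivRight hP_iff)]
    exact Set.ncard_Iio_nat _
  rw [hcard, hP_iff]

theorem StrictAnti.eqOn_Iio_of_image_eq {α : Type*} [Preorder α] {f g : ℕ → α}
    (hf : StrictAnti f) (hg : StrictAnti g) {d : ℕ} (h : f '' Set.Iio d = g '' Set.Iio d) :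
    Set.EqOn f g (Set.Iio d) := by
  have hfg : f ∘ Fin.val = g ∘ (Fin.val : Fin d → ℕ) := by
    rw [← StrictAnti.range_inj (hf.comp_strictMono Fin.val_strictMono)
      (hg.comp_strictMono Fin.val_strictMono), Set.range_comp, Set.range_comp, Fin.range_val, h]
  exact fun i hi => congrFun hfg ⟨i, hi⟩

theorem word_eq_zero_iff (p : ℕ → ℕ) (k : ℤ) :
    word p k = 0 ↔ ∃ m : ℕ, k = (p m : ℤ) - ((m : ℤ) + 1) := by
  unfold word
  split_ifs with h <;> simp [h]

theorem word_le_one (p : ℕ → ℕ) (k : ℤ) : word p k ≤ 1 := by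
  unfold word
  split_ifs <;> simp

namespace IsPartition

variable {p : ℕ → ℕ}

theorem lt_pconj_iff (hp : IsPartition p) (i j : ℕ) : i < pconj p j ↔ j + 1 ≤ p i := by
  obtain ⟨N, hN⟩ := hp.2
  refine lt_card_subtype_iff_of_antitone (fun a b hab h => h.trans (hp.1 hab)) ⟨N, ?_⟩ i
  simp [hN N le_rfl]

theorem lt_durfee_iff (hp : IsPartition p) (i : ℕ) : i < durfee p ↔ i + 1 ≤ p i := by
  obtain ⟨N, hN⟩ := hp.2
  refine lt_card_subtype_iff_of_antitone (fun a b hab h => ?_) ⟨N, ?_⟩ i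
  · have := hp.1 hab
    change b + 1 ≤ p b at h
    change a + 1 ≤ p a
    omega
  · simp [hN N le_rfl]

protected theorem pconj (hp : IsPartition p) : IsPartition (pconj p) := by
  refine ⟨fun a b hab => ?_, p 0, fun j hj => ?_⟩
  · by_contra! h
    have := (hp.lt_pconj_iff _ b).1 h
    have := (hp.lt_pconj_iff (pconj p a) a).not.1 (lt_irrefl _)
    omega
  · by_contra h
    have := (hp.lt_pconj_iff 0 j).1 (Nat.pos_of_ne_zero h)
    omega

theorem pconj_pconj (hp : IsPartition p) : pconj (pconj p) = p := by
  funext j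
  refine eq_of_forall_lt_iff fun i => ?_
  rw [hp.pconj.lt_pconj_iff, Nat.add_one_le_iff, hp.lt_pconj_iff, Nat.add_one_le_iff]

theorem durfee_pconj (hp : IsPartition p) : durfee (pconj p) = durfee p := by
  refine eq_of_forall_lt_iff fun i => ?_
  rw [hp.pconj.lt_durfee_iff, Nat.add_one_le_iff, hp.lt_pconj_iff, hp.lt_durfee_iff]

theorem strictAnti_sub (hp : IsPartition p) : StrictAnti fun m : ℕ => (p m : ℤ) - m := by
  intro a b hab
  have := hp.1 hab.le
  simp only
  omega

theorem word_natCast_eq_zero_iff (hp : IsPartition p) (k : ℕ) :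
    word p k = 0 ↔ ∃ m < durfee p, (p m : ℤ) - ((m : ℤ) + 1) = k := by
  rw [word_eq_zero_iff]
  exact ⟨fun ⟨m, hm⟩ => ⟨m, (hp.lt_durfee_iff m).2 (by omega), hm.symm⟩,
    fun ⟨m, _, hm⟩ => ⟨m, hm.symm⟩⟩

theorem exists_pconj_sub_eq_iff (hp : IsPartition p) (k : ℤ) :
    (∃ j : ℕ, (pconj p j : ℤ) - ((j : ℤ) + 1) = k) ↔ ∀ m : ℕ, (p m : ℤ) - m ≠ -k := by
  constructor
  · rintro ⟨j, rfl⟩ m hm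
    by_cases h : j + 1 ≤ p m
    · have := (hp.lt_pconj_iff m j).2 h
      omega
    · have := (hp.lt_pconj_iff m j).not.2 h
      omega
  · intro hk
    -- `n` is the first row with `p n - n < -k`; then column `n - k - 1` has length exactly `n`.
    have hex : ∃ n : ℕ, (p n : ℤ) - n < -k :=
      ⟨p 0 + k.toNat + 1, by have := hp.1 (Nat.zero_le (p 0 + k.toNat + 1)); omega⟩
    set n := Nat.find hex
    have hn : (p n : ℤ) - n < -k := Nat.find_spec hex
    have hbefore : ∀ i < n, -k < (p i : ℤ) - i := fun i hi =>
      lt_of_le_of_ne (not_lt.1 (Nat.find_min hex hi)) (hk i).symm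
    have hcol : ∀ i, i < pconj p (n - k - 1).toNat ↔ i < n := fun i => by
      rw [hp.lt_pconj_iff]
      constructor
      · intro h
        by_contra! hi
        have := hp.1 hi
        omega
      · intro hi
        have := hbefore (n - 1) (by omega)
        have := hp.1 (show i ≤ n - 1 by omega)
        omega
    refine ⟨(n - k - 1).toNat, ?_⟩
    rw [eq_of_forall_lt_iff hcol]
    omega

theorem word_pconj (hp : IsPartition p) (k : ℤ) : word (pconj p) k = 1 - word p (-k - 1) := by
  have hiff : word (pconj p) k = 0 ↔ word p (-k - 1) ≠ 0 := by
    rw [word_eq_zero_iff, ne_eq, word_eq_zero_iff, not_exists]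
    refine (exists_congr fun j => eq_comm).trans
      ((hp.exists_pconj_sub_eq_iff k).trans (forall_congr' fun m => ?_))
    omega
  have := word_le_one (pconj p) k
  have := word_le_one p (-k - 1)
  omega

theorem image_sub_Iio_durfee_eq_of_word (hp : IsPartition p) (h0 : word p 0 = 1)
    (hshift : ∀ k : ℕ, word p ((k + 1 : ℕ) : ℤ) = word (pconj p) k) :
    (fun m : ℕ => (p m : ℤ) - m) '' Set.Iio (durfee p) =
      (fun m : ℕ => (pconj p m : ℤ) - m + 1) '' Set.Iio (durfee p) := by
  have hd : durfee (pconj p) = durfee p := hp.durfee_pconj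
  ext x
  simp only [Set.mem_image, Set.mem_Iio]
  constructor
  · rintro ⟨m, hm, rfl⟩
    have hpos : 0 < (p m : ℤ) - (m + 1) := by
      refine lt_of_le_of_ne (by have := (hp.lt_durfee_iff m).1 hm; omega) fun h => ?_
      have := (hp.word_natCast_eq_zero_iff 0).2 ⟨m, hm, by rw [← h, Nat.cast_zero]⟩
      rw [Nat.cast_zero, h0] at this
      exact one_ne_zero this
    have hk : word p ((p m - m - 2 + 1 : ℕ) : ℤ) = 0 :=
      (hp.word_natCast_eq_zero_iff _).2 ⟨m, hm, by omega⟩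
    rw [hshift, hp.pconj.word_natCast_eq_zero_iff, hd] at hk
    obtain ⟨m', hm', hm'k⟩ := hk
    exact ⟨m', hm', by omega⟩
  · rintro ⟨m, hm, rfl⟩
    have := (hp.pconj.lt_durfee_iff m).1 (hd ▸ hm)
    have hk : word (pconj p) ((pconj p m - (m + 1) : ℕ) : ℤ) = 0 :=
      (hp.pconj.word_natCast_eq_zero_iff _).2 ⟨m, hd ▸ hm, by omega⟩
    rw [← hshift, hp.word_natCast_eq_zero_iff] at hk
    obtain ⟨m', hm', hm'k⟩ := hk
    exact ⟨m', hm', by omega⟩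

theorem isDD_iff_word (hp : IsPartition p) :
    IsDD p ↔ word p 0 = 1 ∧ ∀ k : ℕ, word p ((k + 1 : ℕ) : ℤ) = word (pconj p) k := by
  have hd : durfee (pconj p) = durfee p := hp.durfee_pconj
  constructor
  · intro hDD
    have h0 : ¬ word p (0 : ℕ) = 0 := by
      rw [hp.word_natCast_eq_zero_iff]
      rintro ⟨m, hm, hm0⟩
      have := (hp.pconj.lt_durfee_iff m).1 (hd ▸ hm)
      have := hDD m hm
      omega
    have hshift (k : ℕ) : word p ((k + 1 : ℕ) : ℤ) = 0 ↔ word (pconj p) k = 0 := by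
      rw [hp.word_natCast_eq_zero_iff, hp.pconj.word_natCast_eq_zero_iff, hd]
      refine exists_congr fun m => and_congr_right fun hm => ?_
      rw [hDD m hm]
      push_cast
      omega
    refine ⟨?_, fun k => ?_⟩
    · have := word_le_one p 0
      rw [Nat.cast_zero] at h0
      omega
    · have := hshift k
      have := word_le_one p ((k + 1 : ℕ) : ℤ)
      have := word_le_one (pconj p) k
      omega
  · rintro ⟨h0, hshift⟩ m hm
    have := hp.strictAnti_sub.eqOn_Iio_of_image_eq (hp.pconj.strictAnti_sub.add_const 1)
      (hp.image_sub_Iio_durfee_eq_of_word h0 hshift) hm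
    simp only at this
    omega

theorem isDDtr_iff (hp : IsPartition p) : IsDDtr p ↔ IsDD (pconj p) :=
  ⟨fun ⟨_, hq, hDD, hpq⟩ => by rwa [hpq, hq.pconj_pconj],
    fun h => ⟨pconj p, hp.pconj, h, hp.pconj_pconj.symm⟩⟩

end IsPartition

/-- A partition `λ` is the conjugate of a doubled distinct partition
(`λ ∈ 𝒟𝒟^tr`) if and only if its binary word `ψ(λ) = (c_k)` satisfies
`c_{-1} = 0` and `c_{-k-2} = 1 - c_k` for all integers `k ≥ 0`. -/
theorem conj_doubled_distinct_iff_word (p : ℕ → ℕ) (hp : IsPartition p) :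
    IsDDtr p ↔
      (word p (-1) = 0 ∧ ∀ k : ℕ, word p (-(k : ℤ) - 2) = 1 - word p (k : ℤ)) := by
  rw [hp.isDDtr_iff, hp.pconj.isDD_iff_word, hp.pconj_pconj]
  simp only [hp.word_pconj]
  refine and_congr ?_ (forall_congr' fun k => ?_)
  · rw [neg_zero, zero_sub]
    have := word_le_one p (-1)
    omega
  · have hk : -((k + 1 : ℕ) : ℤ) - 1 = -(k : ℤ) - 2 := by push_cast; ring
    rw [hk]
    have := word_le_one p (-(k : ℤ) - 2)
    have := word_le_one p k
    omega
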